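/- arXiv:2305.17155 — 7 statements merged into one kernel-verified Lean document; each statement's English description precedes it below -/
import Mathlib

section
/- Let (λ_n)_{n≥1} satisfy 0 < P ≤ λ_n for all n, and (b_n)_{n≥0} satisfy |b_n| ≤ B. Define (x_n) by x_0 ∈ ℝ and x_{n+1} equal to the unique solution of X = x_n + max(0, -λ_{n+1} X + b_n). Then (x_n) is bounded: there exists C depending only on |x_0|, B, P with |x_n| ≤ C for all n. -/
theorem stmt_5 (P B : ℝ) (lam b x : ℕ → ℝ)
    (hP : 0 < P) (hlam : ∀ n, P ≤ lam n)
    (hb : ∀ n, |b n| ≤ B)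
    (hx : ∀ n, x (n + 1) = x n + max 0 (-lam (n + 1) * x (n + 1) + b n)) :
    ∃ C : ℝ, ∀ n, |x n| ≤ C := by
  have hB : 0 ≤ B := le_trans (abs_nonneg _) (hb 0)
  set C : ℝ := max |x 0| (B / P) with hCdef
  have hC0 : 0 ≤ C := le_trans (abs_nonneg _) (le_max_left _ _)
  have hBC : B ≤ P * C := by
    have : B / P ≤ C := le_max_right _ _
    calc B = P * (B / P) := by field_simp
    _ ≤ P * C := by nlinarith
  refine ⟨C, fun n => ?_⟩
  induction n with
  | zero => exact le_max_left _ _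
  | succ n ih =>
    have hl := hlam (n + 1)
    have h1 : (0:ℝ) < 1 + lam (n + 1) := by linarith
    by_cases h : -lam (n + 1) * x (n + 1) + b n ≤ 0
    · have := hx n
      rw [max_eq_left h] at this
      rw [this]; simpa using ih
    · push_neg at h
      have heq : (1 + lam (n + 1)) * x (n + 1) = x n + b n := by
        have := hx n
        rw [max_eq_right h.le] at this
        nlinarith [this]
      have key : |x (n + 1)| * (1 + lam (n + 1)) = |x n + b n| := by
        rw [← abs_of_pos h1, ← abs_mul, mul_comm, heq]
      have hbd : |x n + b n| ≤ C + B :=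
        le_trans (abs_add_le _ _) (add_le_add ih (hb n))
      nlinarith [abs_nonneg (x (n + 1)), key, hbd]
end

section
/- Let W ∈ ℝ^{M×M} be upper triangular with diagonal entries in [-1, 0), b ∈ ℝ^M, and x ∈ ℝ^M. Then the equation X = x + ReLU(WX + b) (ReLU applied componentwise) has a solution X ∈ ℝ^M, which can be computed by forward substitution: each coordinate X_m is determined by x_m, b_m, and the previously determined coordinates X_1, ..., X_{m-1}. -/
noncomputable def solAux (M : ℕ) (W : Matrix (Fin M) (Fin M) ℝ) (b x : Fin M → ℝ) :
    Fin M → ℝ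
  | m =>
    if W m m * x m + (b m + ∑ j : Fin M, if _h : m < j then W m j * solAux M W b x j else 0) ≤ 0
    then x m
    else (x m + (b m + ∑ j : Fin M, if _h : m < j then W m j * solAux M W b x j else 0)) / (1 - W m m)
termination_by m => M - m.val
decreasing_by
  all_goals (have hj := j.isLt; have := Fin.lt_def.mp _h; omega)

lemma scalar_ex (a x c : ℝ) (ha1 : -1 ≤ a) (ha0 : a < 0) :
    (if a * x + c ≤ 0 then x else (x + c) / (1 - a)) =
      x + max 0 (a * (if a * x + c ≤ 0 then x else (x + c) / (1 - a)) + c) := by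
  have h1 : (0:ℝ) < 1 - a := by linarith
  split_ifs with h
  · rw [max_eq_left h]; ring
  · have key : a * ((x + c)/(1-a)) + c = (a*x + c)/(1-a) := by field_simp; ring
    have hpos : 0 < a * ((x + c)/(1-a)) + c := by
      rw [key]; exact div_pos (by linarith [not_le.1 h]) h1
    rw [max_eq_right hpos.le, key]
    field_simp
    ring

lemma scalar_uniq (a x c t s : ℝ) (ha0 : a < 0)
    (ht : t = x + max 0 (a*t+c)) (hs : s = x + max 0 (a*s+c)) : t = s := by
  rcases lt_trichotomy t s with h|h|h
  · have : max 0 (a*s+c) ≤ max 0 (a*t+c) := max_le_max le_rfl (by nlinarith)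
    linarith
  · exact h
  · have : max 0 (a*t+c) ≤ max 0 (a*s+c) := max_le_max le_rfl (by nlinarith)
    linarith

lemma mulsplit (M : ℕ) (W : Matrix (Fin M) (Fin M) ℝ)
    (htri : ∀ i j : Fin M, j < i → W i j = 0) (f : Fin M → ℝ) (m : Fin M) :
    W.mulVec f m = W m m * f m + ∑ j : Fin M, (if m < j then W m j * f j else 0) := by
  have hterm : ∀ j : Fin M, W m j * f j =
      (if j = m then W m m * f m else 0) + (if m < j then W m j * f j else 0) := by
    intro j
    rcases lt_trichotomy j m with h|h|h
    · simp [htri m j h, h.ne, not_lt.2 h.le]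
    · simp [h, lt_irrefl]
    · simp [h, h.ne']
  simp only [Matrix.mulVec, dotProduct]
  rw [Finset.sum_congr rfl (fun j _ => hterm j), Finset.sum_add_distrib,
    Finset.sum_ite_eq' Finset.univ m]
  simp

theorem stmt_7 (M : ℕ) (W : Matrix (Fin M) (Fin M) ℝ) (b x : Fin M → ℝ)
    (htri : ∀ i j : Fin M, j < i → W i j = 0)
    (hdiag : ∀ i : Fin M, W i i ∈ Set.Ico (-1 : ℝ) 0) :
    ∃ X : Fin M → ℝ,
      (∀ m : Fin M, X m = x m + max 0 (W.mulVec X m + b m)) ∧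
      ∀ Y : Fin M → ℝ, (∀ m : Fin M, Y m = x m + max 0 (W.mulVec Y m + b m)) →
        ∀ m : Fin M, (∀ j : Fin M, j < m → Y j = X j) → Y m = X m := by
  set X := solAux M W b x with hXdef
  have hXfix : ∀ m : Fin M, X m = x m + max 0 (W.mulVec X m + b m) := by
    intro m
    have hceq : X m = if W m m * x m + (b m + ∑ j : Fin M, if m < j then W m j * X j else 0) ≤ 0
        then x m
        else (x m + (b m + ∑ j : Fin M, if m < j then W m j * X j else 0)) / (1 - W m m) := by
      rw [hXdef, solAux]
      simp only [dite_eq_ite]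
    rw [mulsplit M W htri X m]
    obtain ⟨ha1, ha0⟩ := hdiag m
    have := scalar_ex (W m m) (x m)
      (b m + ∑ j : Fin M, if m < j then W m j * X j else 0) ha1 ha0
    rw [hceq]
    convert this using 3 <;> ring
  refine ⟨X, hXfix, ?_⟩
  intro Y hY
  have key : ∀ k : ℕ, ∀ m : Fin M, M - m.val ≤ k → Y m = X m := by
    intro k
    induction k with
    | zero => intro m hm; have := m.isLt; omega
    | succ k ih =>
      intro m hm
      have hsum : (∑ j : Fin M, if m < j then W m j * Y j else 0)
          = ∑ j : Fin M, if m < j then W m j * X j else 0 := by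
        refine Finset.sum_congr rfl fun j _ => ?_
        split_ifs with h
        · rw [ih j (by have := Fin.lt_def.mp h; omega)]
        · rfl
      obtain ⟨ha1, ha0⟩ := hdiag m
      have hYm := hY m
      have hXm := hXfix m
      rw [mulsplit M W htri Y m] at hYm
      rw [mulsplit M W htri X m] at hXm
      rw [hsum] at hYm
      rw [add_assoc] at hYm hXm
      exact scalar_uniq (W m m) (x m)
        ((∑ j : Fin M, if m < j then W m j * X j else 0) + b m) (Y m) (X m) ha0
        hYm hXm
  intro m _; exact key M m (by omega)
end

section
/- Let W ∈ ℝ^{M×M} be upper triangular with diagonal entries in (-1, 0). Then the fixed-point equation X = x + ReLU(WX + b) has exactly one solution for every x, b ∈ ℝ^M. -/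
private lemma scalar_fix (a x c : ℝ) (ha1 : -1 < a) (ha2 : a < 0) :
    ∃! t : ℝ, t = x + max 0 (a * t + c) := by
  have h1a : (0:ℝ) < 1 - a := by linarith
  have huniq : ∀ t s : ℝ, t = x + max 0 (a * t + c) → s = x + max 0 (a * s + c) → t = s := by
    intro t s ht hs
    have h1 : t - s = max (a*t+c) 0 - max (a*s+c) 0 := by
      rw [max_comm, max_comm (a*s+c)]
      calc t - s = (x + max 0 (a*t+c)) - (x + max 0 (a*s+c)) := by rw [← ht, ← hs]
      _ = max 0 (a*t+c) - max 0 (a*s+c) := by ring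
    have h2 : |t - s| ≤ |a| * |t - s| := by
      calc |t - s| = |max (a*t+c) 0 - max (a*s+c) 0| := by rw [h1]
      _ ≤ |(a*t+c) - (a*s+c)| := abs_max_sub_max_le_abs _ _ _
      _ = |a * (t - s)| := by ring_nf
      _ = |a| * |t - s| := abs_mul _ _
    have ha : |a| < 1 := abs_lt.mpr ⟨by linarith, by linarith⟩
    have h3 : |t - s| = 0 := by nlinarith [abs_nonneg (t - s)]
    have := abs_eq_zero.mp h3
    linarith [sub_eq_zero.mp this]
  by_cases h : a * x + c ≤ 0
  · have hx : x = x + max 0 (a * x + c) := by rw [max_eq_left h]; ring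
    exact ⟨x, hx, fun y hy => huniq y x hy hx⟩
  · push_neg at h
    have key : a * ((x + c) / (1 - a)) + c = (a * x + c) / (1 - a) := by
      field_simp
      ring
    have pos : 0 ≤ a * ((x + c) / (1 - a)) + c := by rw [key]; positivity
    have hteq : (x + c) / (1 - a) = x + max 0 (a * ((x + c) / (1 - a)) + c) := by
      rw [max_eq_right pos, key]
      field_simp
      ring
    exact ⟨(x + c) / (1 - a), hteq, fun y hy => huniq y _ hy hteq⟩

private lemma mulVec_succ {n : ℕ} (W : Matrix (Fin (n+1)) (Fin (n+1)) ℝ)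
    (htri : ∀ i j : Fin (n+1), j < i → W i j = 0) (Z : Fin (n+1) → ℝ) (i : Fin n) :
    W.mulVec Z i.succ = (Matrix.of fun i j : Fin n => W i.succ j.succ).mulVec (Z ∘ Fin.succ) i := by
  simp only [Matrix.mulVec, dotProduct, Fin.sum_univ_succ, Matrix.of_apply, Function.comp]
  rw [htri i.succ 0 (Fin.succ_pos i)]
  ring

private lemma key_lemma : ∀ (M : ℕ) (W : Matrix (Fin M) (Fin M) ℝ),
    (∀ i j : Fin M, j < i → W i j = 0) →
    (∀ i : Fin M, W i i ∈ Set.Ioo (-1 : ℝ) 0) →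
    ∀ x b : Fin M → ℝ,
      ∃! X : Fin M → ℝ, ∀ m : Fin M, X m = x m + max 0 (W.mulVec X m + b m) := by
  intro M
  induction M with
  | zero =>
    intro W _ _ x b
    exact ⟨fun i => i.elim0, fun m => m.elim0, fun y _ => funext fun m => m.elim0⟩
  | succ n ih =>
    intro W htri hdiag x b
    set W' : Matrix (Fin n) (Fin n) ℝ := Matrix.of fun i j : Fin n => W i.succ j.succ with hW'
    have htri' : ∀ i j : Fin n, j < i → W' i j = 0 := fun i j h =>
      htri i.succ j.succ (Fin.succ_lt_succ_iff.mpr h)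
    have hdiag' : ∀ i : Fin n, W' i i ∈ Set.Ioo (-1 : ℝ) 0 := fun i => hdiag i.succ
    obtain ⟨Y, hY, hYu⟩ := ih W' htri' hdiag' (fun i => x i.succ) (fun i => b i.succ)
    set c : ℝ := (∑ j : Fin n, W 0 j.succ * Y j) + b 0 with hc
    obtain ⟨ha1, ha2⟩ := hdiag 0
    obtain ⟨t, ht, htu⟩ := scalar_fix (W 0 0) (x 0) c ha1 ha2
    set X : Fin (n+1) → ℝ := Fin.cons t Y with hX
    have hXsucc : X ∘ Fin.succ = Y := by
      funext i; simp [hX]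
    have hmv0 : ∀ Z : Fin (n+1) → ℝ,
        W.mulVec Z 0 + b 0 = W 0 0 * Z 0 + ((∑ j : Fin n, W 0 j.succ * Z j.succ) + b 0) := by
      intro Z
      simp only [Matrix.mulVec, dotProduct, Fin.sum_univ_succ]
      ring
    refine ⟨X, ?_, ?_⟩
    · intro m
      refine Fin.cases ?_ ?_ m
      · have : W.mulVec X 0 + b 0 = W 0 0 * t + c := by
          rw [hmv0 X, hX]
          simp [hc]
        rw [show X 0 = t from rfl, this]
        exact ht
      · intro i
        have h1 : W.mulVec X i.succ = W'.mulVec Y i := by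
          rw [mulVec_succ W htri X i, hXsucc]
        rw [show X i.succ = Y i from rfl, h1]
        exact hY i
    · intro Z hZ
      have hZtail : Z ∘ Fin.succ = Y := by
        apply hYu
        intro i
        have h1 : W.mulVec Z i.succ = W'.mulVec (Z ∘ Fin.succ) i := mulVec_succ W htri Z i
        have := hZ i.succ
        rw [h1] at this
        exact this
      have hZ0 : Z 0 = t := by
        apply htu
        have := hZ 0
        rw [hmv0 Z] at this
        have hsum : (∑ j : Fin n, W 0 j.succ * Z j.succ) = ∑ j : Fin n, W 0 j.succ * Y j := by
          refine Finset.sum_congr rfl fun j _ => ?_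
          rw [show Z j.succ = (Z ∘ Fin.succ) j from rfl, hZtail]
        rw [hsum] at this
        exact this
      funext m
      refine Fin.cases ?_ ?_ m
      · rw [hZ0]; rfl
      · intro i
        rw [show Z i.succ = (Z ∘ Fin.succ) i from rfl, hZtail]
        rfl

theorem stmt_8 (M : ℕ) (W : Matrix (Fin M) (Fin M) ℝ)
    (htri : ∀ i j : Fin M, j < i → W i j = 0)
    (hdiag : ∀ i : Fin M, W i i ∈ Set.Ioo (-1 : ℝ) 0) :
    ∀ x b : Fin M → ℝ,
      ∃! X : Fin M → ℝ, ∀ m : Fin M, X m = x m + max 0 (W.mulVec X m + b m) := by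
  exact key_lemma M W htri hdiag
end

section
/- Consider the M-dimensional implicit ResNet x_{n+1} = x_n + ReLU(W_n x_{n+1} + b_n), where each W_n is upper triangular with diagonal entries -λ_n^{(m)} satisfying λ_n^{(m)} ≥ P > 0, the strict upper entries of all W_n are bounded in absolute value by Q, and the entries of all b_n are bounded by B. Then the sequence (x_n)_{n∈ℕ} is bounded in ℝ^M. -/
theorem stmt_9 (M : ℕ) (P Q B : ℝ) (hP : 0 < P)
    (W : ℕ → Matrix (Fin M) (Fin M) ℝ) (b : ℕ → Fin M → ℝ) (x : ℕ → Fin M → ℝ)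
    (htri : ∀ n, ∀ i j : Fin M, j < i → W n i j = 0)
    (hdiag : ∀ n, ∀ m : Fin M, P ≤ -(W n m m))
    (hQ : ∀ n, ∀ i j : Fin M, i < j → |W n i j| ≤ Q)
    (hB : ∀ n, ∀ m : Fin M, |b n m| ≤ B)
    (hx : ∀ n, ∀ m : Fin M,
      x (n + 1) m = x n m + max 0 ((W n).mulVec (x (n + 1)) m + b n m)) :
    ∃ C : ℝ, ∀ n, ‖x n‖ ≤ C := by
  have mono : ∀ n, ∀ m : Fin M, x 0 m ≤ x n m := by
    intro n m
    induction n with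
    | zero => exact le_refl _
    | succ n ih =>
      rw [hx n m]
      have h0 := le_max_left (0:ℝ) ((W n).mulVec (x (n+1)) m + b n m)
      linarith
  have key : ∀ k : ℕ, ∃ C : ℝ, 0 ≤ C ∧ ∀ n, ∀ m : Fin M, M ≤ (m:ℕ) + k → |x n m| ≤ C := by
    intro k
    induction k with
    | zero =>
      exact ⟨0, le_refl 0, fun n m h => absurd h (by have := m.isLt; omega)⟩
    | succ k ih =>
      obtain ⟨C, hC0, hC⟩ := ih
      by_cases hk : M ≤ k
      · exact ⟨C, hC0, fun n m h => hC n m (by have := m.isLt; omega)⟩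
      push_neg at hk
      have hM0 : 0 < M := by omega
      set m0 : Fin M := ⟨M - k - 1, by omega⟩ with hm0
      set K : ℝ := B + M * (max Q 0 * C) with hKdef
      have hB0 : 0 ≤ B := le_trans (abs_nonneg _) (hB 0 m0)
      have hK0 : 0 ≤ K := by
        have h1 : 0 ≤ (M:ℝ) * (max Q 0 * C) := by positivity
        simp only [hKdef]; linarith
      set D : ℝ := max (K / P) |x 0 m0| with hDdef
      have hub : ∀ n, x n m0 ≤ D := by
        intro n
        induction n with
        | zero => exact le_trans (le_abs_self _) (le_max_right _ _)
        | succ n ih =>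
          set t : ℝ := (W n).mulVec (x (n+1)) m0 + b n m0 with ht
          by_cases hpos : t ≤ 0
          · rw [hx n m0, ← ht, max_eq_left hpos, add_zero]; exact ih
          · push_neg at hpos
            have hsum : (W n).mulVec (x (n+1)) m0 - W n m0 m0 * x (n+1) m0
                = ∑ j ∈ Finset.univ.erase m0, W n m0 j * x (n+1) j := by
              rw [Matrix.mulVec, dotProduct,
                ← Finset.add_sum_erase Finset.univ _ (Finset.mem_univ m0)]
              ring
            have hterm : ∀ j ∈ Finset.univ.erase m0,
                |W n m0 j * x (n+1) j| ≤ max Q 0 * C := by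
              intro j hj
              rcases lt_trichotomy j m0 with h | h | h
              · rw [htri n m0 j h]
                simp only [zero_mul, abs_zero]
                have := le_max_right Q 0
                positivity
              · exact absurd h (Finset.ne_of_mem_erase hj)
              · rw [abs_mul]
                refine mul_le_mul (le_trans (hQ n m0 j h) (le_max_left _ _))
                  (hC (n+1) j ?_) (abs_nonneg _) (le_max_right _ _)
                have hjlt : (m0:ℕ) < (j:ℕ) := h
                simp only [hm0] at hjlt
                omega
            have hcb : (W n).mulVec (x (n+1)) m0 - W n m0 m0 * x (n+1) m0
                ≤ (M:ℝ) * (max Q 0 * C) := by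
              rw [hsum]
              calc ∑ j ∈ Finset.univ.erase m0, W n m0 j * x (n+1) j
                  ≤ |∑ j ∈ Finset.univ.erase m0, W n m0 j * x (n+1) j| := le_abs_self _
                _ ≤ ∑ j ∈ Finset.univ.erase m0, |W n m0 j * x (n+1) j| :=
                    Finset.abs_sum_le_sum_abs _ _
                _ ≤ (Finset.univ.erase m0).card • (max Q 0 * C) :=
                    Finset.sum_le_card_nsmul _ _ _ hterm
                _ ≤ (M:ℝ) * (max Q 0 * C) := by
                    rw [nsmul_eq_mul]
                    have hcard : ((Finset.univ.erase m0).card : ℝ) ≤ (M:ℝ) := by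
                      have : (Finset.univ.erase m0).card ≤ M := by
                        simpa using le_trans (Finset.card_erase_le (s := (Finset.univ : Finset (Fin M))) (a := m0)) (by simp)
                      exact_mod_cast this
                    have hr : 0 ≤ max Q 0 * C := by
                      have := le_max_right Q 0; positivity
                    exact mul_le_mul_of_nonneg_right hcard hr
            have hc : t - W n m0 m0 * x (n+1) m0 ≤ K := by
              have hb := le_trans (le_abs_self _) (hB n m0)
              simp only [ht, hKdef]
              linarith
            -- From t > 0: (-(W n m0 m0)) * x (n+1) m0 < K
            have hlam : P ≤ -(W n m0 m0) := hdiag n m0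
            have hlt : (-(W n m0 m0)) * x (n+1) m0 < K := by nlinarith
            rcases le_or_gt (x (n+1) m0) 0 with hy | hy
            · exact le_trans hy (le_trans (div_nonneg hK0 hP.le) (le_max_left _ _))
            · have h1 : P * x (n+1) m0 ≤ (-(W n m0 m0)) * x (n+1) m0 :=
                mul_le_mul_of_nonneg_right hlam hy.le
              have h2 : x (n+1) m0 ≤ K / P := by
                rw [le_div_iff₀ hP]; nlinarith
              exact le_trans h2 (le_max_left _ _)
      refine ⟨max C D, le_trans hC0 (le_max_left _ _), fun n m h => ?_⟩
      by_cases hm : M ≤ (m:ℕ) + k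
      · exact le_trans (hC n m hm) (le_max_left _ _)
      · have hmm : m = m0 := by
          apply Fin.ext
          simp only [hm0]
          have := m.isLt
          omega
        subst hmm
        have h1 : x n m0 ≤ D := hub n
        have h2 : -D ≤ x n m0 := by
          have := mono n m0
          have h3 : -|x 0 m0| ≤ x 0 m0 := neg_abs_le _
          have h4 : |x 0 m0| ≤ D := le_max_right _ _
          linarith
        exact le_trans (abs_le.2 ⟨h2, h1⟩) (le_max_right _ _)
  obtain ⟨C, hC0, hC⟩ := key M
  refine ⟨C, fun n => ?_⟩
  rw [pi_norm_le_iff_of_nonneg hC0]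
  intro m
  rw [Real.norm_eq_abs]
  exact hC n m (Nat.le_add_left M m)
end

section
/- Under the hypotheses of the stability theorem (W_n upper triangular, diagonal entries in [-1,0) bounded away from 0 by -P, off-diagonal entries bounded by Q, biases bounded by B), the implicit ResNet scheme (x_n) is stable in L^p norm: there exists a constant C (depending on x_0, M, P, Q, B, p but not on n) such that ‖x_n‖_p ≤ C for all n ∈ ℕ. -/
/-!
Since the ReLU is nonnegative, every coordinate of `x n` is nondecreasing in `n`, so only an
upper bound is needed. Coordinates are bounded from the last one backwards: once the coordinates
`j > i` are bounded, upper triangularity makes coordinate `i` a scalar implicit step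
`y' = y + max 0 (a y' + r)` with `a ≤ -P` and `r ≤ R`, and a step that moves `y` at all
lands at most at `R / P`.
-/

open Bornology Set

lemma le_max_of_eq_add_max_zero {P R a r y y' : ℝ} (hP : 0 < P) (hR : 0 ≤ R) (ha : a ≤ -P)
    (hr : r ≤ R) (h : y' = y + max 0 (a * y' + r)) : y' ≤ max y (R / P) := by
  by_contra! hlt
  obtain ⟨hy, hRy⟩ := max_lt_iff.1 hlt
  have hpos : 0 < a * y' + r := by
    by_contra! hle
    rw [max_eq_left hle] at h
    linarith
  have hPy : R < P * y' := (div_lt_iff₀' hP).1 hRy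
  nlinarith [div_nonneg hR hP.le]

lemma isBounded_range_of_eq_add_max_zero {P : ℝ} {a r y : ℕ → ℝ} (hP : 0 < P)
    (ha : ∀ n, a n ≤ -P) (hr : BddAbove (range r))
    (h : ∀ n, y (n + 1) = y n + max 0 (a n * y (n + 1) + r n)) : IsBounded (range y) := by
  obtain ⟨R, hR⟩ := hr
  have hrR : ∀ n, r n ≤ max R 0 := fun n => (hR (mem_range_self n)).trans (le_max_left _ _)
  have hmono : Monotone y := monotone_nat_of_le_succ fun n => by
    rw [h n]
    exact le_add_of_nonneg_right (le_max_left _ _)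
  have hupper : ∀ n, y n ≤ max (y 0) (max R 0 / P) := by
    intro n
    induction n with
    | zero => exact le_max_left _ _
    | succ n ih =>
      exact (le_max_of_eq_add_max_zero hP (le_max_right _ _) (ha n) (hrR n) (h n)).trans
        (max_le ih (le_max_right _ _))
  refine isBounded_iff_bddBelow_bddAbove.2 ⟨⟨y 0, ?_⟩, ⟨max (y 0) (max R 0 / P), ?_⟩⟩ <;>
    rintro _ ⟨n, rfl⟩
  exacts [hmono (Nat.zero_le n), hupper n]

lemma Matrix.BlockTriangular.mulVec_apply_eq_add_sum_Ioi {ι R : Type*} [Fintype ι] [LinearOrder ι]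
    [LocallyFiniteOrderTop ι] [NonUnitalNonAssocSemiring R] {A : Matrix ι ι R}
    (hA : A.BlockTriangular id) (v : ι → R) (i : ι) :
    A.mulVec v i = A i i * v i + ∑ j ∈ Finset.Ioi i, A i j * v j := by
  have hIoi : ∑ j ∈ Finset.Ioi i, A i j * v j = ∑ j ∈ Finset.univ.erase i, A i j * v j := by
    refine Finset.sum_subset (fun j hj => ?_) fun j hj hji => ?_
    · exact Finset.mem_erase.2 ⟨(Finset.mem_Ioi.1 hj).ne', Finset.mem_univ j⟩
    · have hlt : j < i := lt_of_le_of_ne (not_lt.1 (mt Finset.mem_Ioi.2 hji))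
        (Finset.ne_of_mem_erase hj)
      rw [hA hlt, zero_mul]
  rw [hIoi, Finset.add_sum_erase _ (fun j => A i j * v j) (Finset.mem_univ i)]
  rfl

lemma isBounded_range_apply_of_isBounded_gt {ι : Type*} [Fintype ι] [LinearOrder ι]
    [LocallyFiniteOrderTop ι] {P Q B : ℝ} (hP : 0 < P)
    {W : ℕ → Matrix ι ι ℝ} {b : ℕ → ι → ℝ} {x : ℕ → ι → ℝ}
    (htri : ∀ n, (W n).BlockTriangular id) (hdiag : ∀ n m, W n m m ≤ -P)
    (hQ : ∀ n, ∀ i j : ι, i < j → |W n i j| ≤ Q) (hB : ∀ n m, |b n m| ≤ B)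
    (hx : ∀ n m, x (n + 1) m = x n m + max 0 ((W n).mulVec (x (n + 1)) m + b n m))
    (i : ι) (hgt : IsBounded (⋃ j ∈ Ioi i, range fun n => x n j)) :
    IsBounded (range fun n => x n i) := by
  obtain ⟨c, hc⟩ := isBounded_iff_forall_norm_le.1 hgt
  have hxc : ∀ n, ∀ j ∈ Finset.Ioi i, |x n j| ≤ c := fun n j hj =>
    hc _ (mem_biUnion (Finset.mem_Ioi.1 hj) (mem_range_self n))
  set r : ℕ → ℝ := fun n => ∑ j ∈ Finset.Ioi i, W n i j * x (n + 1) j + b n i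
  have hr : BddAbove (range r) := by
    refine ⟨(Finset.Ioi i).card • (Q * c) + B, ?_⟩
    rintro _ ⟨n, rfl⟩
    refine add_le_add (Finset.sum_le_card_nsmul _ _ _ fun j hj => ?_) (le_of_abs_le (hB n i))
    calc W n i j * x (n + 1) j ≤ |W n i j| * |x (n + 1) j| := (le_abs_self _).trans (abs_mul _ _).le
      _ ≤ Q * c := mul_le_mul (hQ n i j (Finset.mem_Ioi.1 hj)) (hxc _ j hj) (abs_nonneg _)
          ((abs_nonneg _).trans (hQ n i j (Finset.mem_Ioi.1 hj)))
  refine isBounded_range_of_eq_add_max_zero hP (fun n => hdiag n i) hr fun n => ?_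
  rw [← add_assoc, ← (htri n).mulVec_apply_eq_add_sum_Ioi]
  exact hx n i

theorem stmt_10 (M : ℕ) (P Q B : ℝ) (hP : 0 < P)
    (W : ℕ → Matrix (Fin M) (Fin M) ℝ) (b : ℕ → Fin M → ℝ) (x : ℕ → Fin M → ℝ)
    (htri : ∀ n, ∀ i j : Fin M, j < i → W n i j = 0)
    (hdiag : ∀ n, ∀ m : Fin M, W n m m ∈ Set.Ico (-1 : ℝ) 0 ∧ W n m m ≤ -P)
    (hQ : ∀ n, ∀ i j : Fin M, i < j → |W n i j| ≤ Q)
    (hB : ∀ n, ∀ m : Fin M, |b n m| ≤ B)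
    (hx : ∀ n, ∀ m : Fin M,
      x (n + 1) m = x n m + max 0 ((W n).mulVec (x (n + 1)) m + b n m))
    (p : ENNReal) [Fact (1 ≤ p)] :
    ∃ C : ℝ, ∀ n, ‖(WithLp.equiv p (Fin M → ℝ)).symm (x n)‖ ≤ C := by
  have hcoord : ∀ i : Fin M, IsBounded (range fun n => x n i) := by
    intro i
    induction i using WellFoundedGT.induction with
    | _ i ih =>
      exact isBounded_range_apply_of_isBounded_gt hP (fun n _ _ => htri n _ _)
        (fun n m => (hdiag n m).2) hQ hB hx i ((isBounded_biUnion (finite_Ioi i)).2 ih)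
  have hrange : IsBounded (range x) := forall_isBounded_image_eval_iff.1 fun i => by
    rw [← range_comp]
    exact hcoord i
  obtain ⟨C, hC⟩ := isBounded_iff_forall_norm_le.1
    ((PiLp.lipschitzWith_toLp p fun _ : Fin M => ℝ).isBounded_image hrange)
  exact ⟨C, fun n => hC _ (mem_image_of_mem _ (mem_range_self n))⟩
end

section
/- Let M be a square matrix with non-negative entries and let λ_pf(M) denote its largest real eigenvalue (Perron–Frobenius eigenvalue). If λ_pf(M) < 1, then for any vectors x, b, the iteration X_{k+1} = x + ReLU(M' X_k + b), where |M'| ≤ M entrywise, is a contraction in the ℓ^∞ norm weighted by the Perron eigenvector when M is positive, and hence has a unique fixed point. -/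
lemma aux11 {M : ℕ} {A W : Matrix (Fin M) (Fin M) ℝ} {lpf : ℝ} {w : Fin M → ℝ}
    (heig : A.mulVec w = lpf • w) (hdom : ∀ i j, |W i j| ≤ A i j)
    (b : Fin M → ℝ) (u v : Fin M → ℝ) (S : ℝ) (hS : ∀ j, |u j - v j| ≤ S * w j) (i : Fin M) :
    |max 0 (W.mulVec u i + b i) - max 0 (W.mulVec v i + b i)| ≤ lpf * S * w i := by
  have h1 : |max 0 (W.mulVec u i + b i) - max 0 (W.mulVec v i + b i)|
      ≤ |(W.mulVec u i + b i) - (W.mulVec v i + b i)| := by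
    simpa [max_comm] using
      abs_max_sub_max_le_abs (W.mulVec u i + b i) (W.mulVec v i + b i) 0
  have h2 : (W.mulVec u i + b i) - (W.mulVec v i + b i) = ∑ j, W i j * (u j - v j) := by
    simp [Matrix.mulVec, dotProduct, mul_sub, Finset.sum_sub_distrib]
  have h3 : |∑ j, W i j * (u j - v j)| ≤ ∑ j, A i j * (S * w j) := by
    refine (Finset.abs_sum_le_sum_abs _ _).trans (Finset.sum_le_sum fun j _ => ?_)
    rw [abs_mul]
    exact mul_le_mul (hdom i j) (hS j) (abs_nonneg _) ((abs_nonneg _).trans (hdom i j))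
  have h4 : ∑ j, A i j * (S * w j) = lpf * S * w i := by
    have := congrFun heig i
    simp only [Matrix.mulVec, dotProduct, Pi.smul_apply, smul_eq_mul] at this
    calc ∑ j, A i j * (S * w j) = S * ∑ j, A i j * w j := by
          rw [Finset.mul_sum]; congr 1; ext j; ring
      _ = lpf * S * w i := by rw [this]; ring
  calc |max 0 (W.mulVec u i + b i) - max 0 (W.mulVec v i + b i)|
      ≤ |∑ j, W i j * (u j - v j)| := by rw [← h2]; exact h1
    _ ≤ ∑ j, A i j * (S * w j) := h3
    _ = lpf * S * w i := h4

theorem stmt_11 (M : ℕ) (A W : Matrix (Fin M) (Fin M) ℝ)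
    (hA : ∀ i j, 0 ≤ A i j) (hApos : ∀ i j, 0 < A i j)
    (lpf : ℝ) (w : Fin M → ℝ) (hw : ∀ i, 0 < w i)
    (heig : A.mulVec w = lpf • w) (hlpf : lpf < 1)
    (hdom : ∀ i j, |W i j| ≤ A i j)
    (x b : Fin M → ℝ) :
    (∃ K : ℝ, K < 1 ∧ ∀ u v : Fin M → ℝ,
      (⨆ i : Fin M, |(x i + max 0 (W.mulVec u i + b i)) -
          (x i + max 0 (W.mulVec v i + b i))| / w i)
        ≤ K * ⨆ i : Fin M, |u i - v i| / w i) ∧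
    ∃! X : Fin M → ℝ, ∀ i, X i = x i + max 0 (W.mulVec X i + b i) := by
  constructor
  · refine ⟨max lpf 0, max_lt hlpf one_pos, fun u v => ?_⟩
    simp only [add_sub_add_left_eq_sub]
    rcases isEmpty_or_nonempty (Fin M) with hM | hM
    · simp [Real.iSup_of_isEmpty]
    · set S := ⨆ j : Fin M, |u j - v j| / w j with hSdef
      have hbdd : BddAbove (Set.range fun j : Fin M => |u j - v j| / w j) :=
        Set.Finite.bddAbove (Set.finite_range _)
      have hS0 : 0 ≤ S := by
        obtain ⟨j⟩ := hM
        exact (div_nonneg (abs_nonneg _) (hw j).le).trans (le_ciSup hbdd j)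
      have hSle : ∀ j, |u j - v j| ≤ S * w j := fun j => by
        rw [← div_le_iff₀ (hw j)]; exact le_ciSup hbdd j
      refine ciSup_le fun i => ?_
      rw [div_le_iff₀ (hw i)]
      calc |max 0 (W.mulVec u i + b i) - max 0 (W.mulVec v i + b i)|
          ≤ lpf * S * w i := aux11 heig hdom b u v S hSle i
        _ ≤ max lpf 0 * S * w i := by
            have : lpf * S ≤ max lpf 0 * S :=
              mul_le_mul_of_nonneg_right (le_max_left _ _) hS0
            nlinarith [(hw i).le]
  · set K : NNReal := Real.toNNReal (max lpf 0) with hKdef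
    have hKcoe : (K : ℝ) = max lpf 0 := Real.coe_toNNReal _ (le_max_right _ _)
    have hK1 : K < 1 := by
      rw [← NNReal.coe_lt_coe, hKcoe]; exact max_lt hlpf one_pos
    set f : (Fin M → ℝ) → (Fin M → ℝ) :=
      fun y i => (x i + max 0 (W.mulVec (fun j => w j * y j) i + b i)) / w i with hfdef
    have hC : ContractingWith K f := by
      refine ⟨hK1, LipschitzWith.of_dist_le_mul fun y z => ?_⟩
      rw [dist_pi_le_iff (by positivity)]
      intro i
      have hbound : ∀ j, |(w j * y j) - (w j * z j)| ≤ dist y z * w j := fun j => by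
        rw [← mul_sub, abs_mul, abs_of_pos (hw j), mul_comm]
        exact mul_le_mul_of_nonneg_right
          (by rw [← Real.dist_eq]; exact dist_le_pi_dist y z j) (hw j).le
      have key := aux11 heig hdom b _ _ (dist y z) hbound i
      have hfi : f y i - f z i =
          (max 0 (W.mulVec (fun j => w j * y j) i + b i)
            - max 0 (W.mulVec (fun j => w j * z j) i + b i)) / w i := by
        show (x i + max 0 (W.mulVec (fun j => w j * y j) i + b i)) / w i
            - (x i + max 0 (W.mulVec (fun j => w j * z j) i + b i)) / w i = _
        rw [div_sub_div_same, add_sub_add_left_eq_sub]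
      rw [Real.dist_eq, hfi, abs_div, abs_of_pos (hw i), div_le_iff₀ (hw i)]
      calc |max 0 (W.mulVec (fun j => w j * y j) i + b i)
            - max 0 (W.mulVec (fun j => w j * z j) i + b i)|
          ≤ lpf * dist y z * w i := key
        _ ≤ (K : ℝ) * dist y z * w i := by
            rw [hKcoe]
            have : lpf * dist y z ≤ max lpf 0 * dist y z :=
              mul_le_mul_of_nonneg_right (le_max_left _ _) dist_nonneg
            nlinarith [(hw i).le]
    set y₀ := hC.fixedPoint f with hy0
    have hfix : f y₀ = y₀ := hC.fixedPoint_isFixedPt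
    refine ⟨fun i => w i * y₀ i, fun i => ?_, fun X' hX' => ?_⟩
    · have h' : (x i + max 0 (W.mulVec (fun j => w j * y₀ j) i + b i)) / w i = y₀ i :=
        congrFun hfix i
      show w i * y₀ i = x i + max 0 (W.mulVec (fun i => w i * y₀ i) i + b i)
      rw [← h', mul_comm, div_mul_cancel₀ _ (hw i).ne']
    · have hrw : (fun j => w j * (X' j / w j)) = X' := by
        funext j; rw [mul_comm, div_mul_cancel₀ _ (hw j).ne']
      have hy' : Function.IsFixedPt f (fun i => X' i / w i) := by
        funext i
        show (x i + max 0 (W.mulVec (fun j => w j * (X' j / w j)) i + b i)) / w i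
          = X' i / w i
        rw [hrw, ← hX' i]
      have heq := hC.fixedPoint_unique hy'
      funext i
      have hi := congrFun heq i
      show X' i = w i * y₀ i
      rw [hy0, ← hi, ← mul_div_assoc, mul_div_cancel_left₀ _ (hw i).ne']
end

section
/- Let W be an M×M real matrix whose entrywise absolute value |W| has Perron–Frobenius eigenvalue (spectral radius) strictly less than 1. Then (I - W) is invertible, and more generally for any 1-Lipschitz componentwise map φ with φ(0)=0, the equation X = x + φ(WX + b) has a unique solution. -/
/-!
Put `A = |W|`. Since `A ≥ 0` has no real eigenvalue `≥ 1`, the resolvent `(t - A)⁻¹` is entrywise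
nonnegative for every `t ≥ 1`: for `t > ‖A‖` it is the Neumann series `∑ Aᵏ / tᵏ⁺¹`, and the set
of good `t` is closed and, since `(t - A)⁻¹ = (1 - (s - t)(s - A)⁻¹)⁻¹ (s - A)⁻¹` is again a
nonnegative series for `t` slightly below `s`, open to the left. Hence `v = (1 - A)⁻¹ 𝟙 ≥ 𝟙`
satisfies `A v = v - 𝟙 ≤ c v` with `c < 1`. The map `X ↦ x + φ(W X + b)` is dominated
componentwise by `A`, so it is a `c`-contraction for the sup norm weighted by `v`, and Banach's
fixed point theorem applies. Taking `φ = id`, `x = b = 0` shows that `1 - W` is injective.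
-/

open Matrix NNReal

namespace Matrix

variable {m n : Type*}

def Nonneg {α : Type*} [Zero α] [LE α] (A : Matrix m n α) : Prop := ∀ i j, 0 ≤ A i j

section OrderedSemiring

variable {α : Type*} [Semiring α] [PartialOrder α] [IsOrderedRing α]

theorem nonneg_one [DecidableEq n] : (1 : Matrix n n α).Nonneg := fun i j => by
  rcases eq_or_ne i j with rfl | h
  · simp
  · simp [one_apply_ne h]

theorem Nonneg.smul {A : Matrix m n α} (hA : A.Nonneg) {c : α} (hc : 0 ≤ c) : (c • A).Nonneg :=
  fun i j => mul_nonneg hc (hA i j)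

variable [Fintype n]

theorem Nonneg.mul {A B : Matrix n n α} (hA : A.Nonneg) (hB : B.Nonneg) : (A * B).Nonneg :=
  fun i j => Finset.sum_nonneg fun k _ => mul_nonneg (hA i k) (hB k j)

theorem Nonneg.pow [DecidableEq n] {A : Matrix n n α} (hA : A.Nonneg) : ∀ k : ℕ, (A ^ k).Nonneg
  | 0 => by simpa using nonneg_one
  | k + 1 => by simpa [pow_succ] using (hA.pow k).mul hA

theorem Nonneg.mulVec_mono {A : Matrix n n α} (hA : A.Nonneg) {x y : n → α} (hxy : x ≤ y) :
    A *ᵥ x ≤ A *ᵥ y := fun i =>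
  Finset.sum_le_sum fun j _ => mul_le_mul_of_nonneg_left (hxy j) (hA i j)

theorem Nonneg.mulVec_nonneg {A : Matrix n n α} (hA : A.Nonneg) {x : n → α} (hx : 0 ≤ x) :
    0 ≤ A *ᵥ x := by
  simpa using hA.mulVec_mono hx

end OrderedSemiring

theorem abs_mulVec_le_map_abs_mulVec {α : Type*} [Ring α] [LinearOrder α] [IsOrderedRing α]
    [Fintype n] (W : Matrix n n α) (x : n → α) (i : n) :
    |(W *ᵥ x) i| ≤ (W.map (fun a => |a|) *ᵥ fun j => |x j|) i :=
  (Finset.abs_sum_le_sum_abs _ _).trans_eq (Finset.sum_congr rfl fun _ _ => abs_mul _ _)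

theorem isClosed_setOf_nonneg : IsClosed {A : Matrix m n ℝ | A.Nonneg} := by
  simp only [Nonneg, Set.ofPred_forall]
  exact isClosed_iInter fun i => isClosed_iInter fun j =>
    isClosed_le continuous_const (continuous_id.matrix_elem i j)

theorem Nonneg.tsum {ι : Type*} {f : ι → Matrix m n ℝ} (hf : ∀ k, (f k).Nonneg) :
    (∑' k, f k).Nonneg := by
  by_cases hsum : Summable f
  · intro i j
    have hentry := hsum.map_tsum (entryAddMonoidHom ℝ i j) (continuous_id.matrix_elem i j)
    simp only [entryAddMonoidHom_apply] at hentry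
    rw [hentry]
    exact tsum_nonneg fun k => hf k i j
  · rw [tsum_eq_zero_of_not_summable hsum]
    exact fun _ _ => le_rfl

section Resolvent

attribute [local instance] Matrix.linftyOpNormedRing Matrix.linftyOpNormedAlgebra

variable [Fintype n] [DecidableEq n]

theorem Nonneg.inverse_one_sub {C : Matrix n n ℝ} (hC : C.Nonneg) (h : ‖C‖ < 1) :
    (Ring.inverse (1 - C)).Nonneg := by
  rw [← geom_series_eq_inverse C h]
  exact Nonneg.tsum hC.pow

theorem Nonneg.inverse_sub {U D : Matrix n n ℝ} (hU : IsUnit U) (hUinv : (Ring.inverse U).Nonneg)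
    (hD : D.Nonneg) (h : ‖Ring.inverse U * D‖ < 1) : (Ring.inverse (U - D)).Nonneg := by
  have hfactor : U - D = U * (1 - Ring.inverse U * D) := by
    rw [mul_sub, mul_one, Ring.mul_inverse_cancel_left _ _ hU]
  rw [hfactor, Ring.inverse_mul (.inl hU)]
  exact (hUinv.mul hD).inverse_one_sub h |>.mul hUinv

theorem resolvent_nonneg_of_norm_lt {A : Matrix n n ℝ} (hA : A.Nonneg) {t : ℝ} (ht : ‖A‖ < t) :
    (resolvent A t).Nonneg := by
  have ht0 : t ≠ 0 := ((norm_nonneg A).trans_lt ht).ne'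
  have hinv : Ring.inverse (algebraMap ℝ (Matrix n n ℝ) t) = t⁻¹ • 1 := by
    rw [← mul_one (Ring.inverse _), Ring.inverse_mul_eq_iff_eq_mul _ _ _
      ((isUnit_iff_ne_zero.2 ht0).map _), Algebra.algebraMap_eq_smul_one, smul_one_mul, smul_smul,
      mul_inv_cancel₀ ht0, one_smul]
  refine Nonneg.inverse_sub ((isUnit_iff_ne_zero.2 ht0).map _) ?_ hA ?_
  · rw [hinv]
    exact nonneg_one.smul (inv_nonneg.2 ((norm_nonneg A).trans ht.le))
  · rw [hinv, smul_one_mul, norm_smul, Real.norm_eq_abs, abs_inv, inv_mul_lt_iff₀ (abs_pos.2 ht0)]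
    simpa using ht.trans_le (le_abs_self t)

theorem resolvent_nonneg_of_le {A : Matrix n n ℝ} {s t : ℝ} (hs : s ∈ resolventSet ℝ A)
    (hRs : (resolvent A s).Nonneg) (hts : t ≤ s) (h : (s - t) * ‖resolvent A s‖ < 1) :
    (resolvent A t).Nonneg := by
  have hsplit : algebraMap ℝ (Matrix n n ℝ) t - A =
      (algebraMap ℝ _ s - A) - (s - t) • 1 := by
    simp only [Algebra.algebraMap_eq_smul_one, sub_smul]
    abel
  rw [resolvent, hsplit]
  refine Nonneg.inverse_sub hs hRs (nonneg_one.smul (sub_nonneg.2 hts)) ?_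
  rwa [mul_smul_comm, mul_one, norm_smul, Real.norm_of_nonneg (sub_nonneg.2 hts)]

theorem resolvent_nonneg {A : Matrix n n ℝ} (hA : A.Nonneg) {t : ℝ}
    (ht : ∀ μ ∈ spectrum ℝ A, μ < t) : (resolvent A t).Nonneg := by
  have hres : ∀ s, t ≤ s → s ∈ resolventSet ℝ A := fun s hs =>
    spectrum.mem_resolventSet_iff.2 <| spectrum.notMem_iff.1 fun hmem => (ht s hmem).not_ge hs
  set S := {s : ℝ | (resolvent A s).Nonneg}
  set b := max t (‖A‖ + 1)
  have hb : b ∈ S := resolvent_nonneg_of_norm_lt hA (by simp [b])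
  have hclosed : IsClosed (S ∩ Set.Icc t b) := by
    rw [Set.inter_comm]
    refine ContinuousOn.preimage_isClosed_of_isClosed (fun s hs => ?_) isClosed_Icc
      isClosed_setOf_nonneg
    exact (spectrum.hasDerivAt_resolvent_const_left (hres s hs.1)).continuousAt.continuousWithinAt
  refine hclosed.Icc_subset_of_forall_exists_lt hb (fun s ⟨hsS, hst, _⟩ r hrs => ?_)
    ⟨le_rfl, le_max_left _ _⟩
  set δ := (‖resolvent A s‖ + 1)⁻¹
  have hδ : 0 < δ := by positivity
  refine ⟨max r (s - δ), ?_, le_max_left _ _, max_lt hrs (by linarith)⟩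
  refine resolvent_nonneg_of_le (hres s hst.le) hsS (max_le hrs.le (by linarith)) ?_
  calc (s - max r (s - δ)) * ‖resolvent A s‖ ≤ δ * ‖resolvent A s‖ := by
        gcongr
        linarith [le_max_right r (s - δ)]
    _ < 1 := by
        rw [inv_mul_lt_iff₀ (by positivity)]
        linarith

end Resolvent

theorem exists_pos_mulVec_le_of_spectrum_lt_one [Fintype n] [DecidableEq n] {A : Matrix n n ℝ}
    (hA : A.Nonneg) (h : ∀ μ ∈ spectrum ℝ A, μ < 1) :
    ∃ v : n → ℝ, (∀ i, 0 < v i) ∧ ∃ c : ℝ≥0, c < 1 ∧ ∀ i, (A *ᵥ v) i ≤ c * v i := by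
  have hunit : IsUnit (1 - A) := by
    simpa using spectrum.notMem_iff.1 fun hmem => (h 1 hmem).false
  set v := resolvent A (1 : ℝ) *ᵥ fun _ => 1
  have hv : v = 1 + A *ᵥ v := by
    have hsolve : (1 - A) *ᵥ v = fun _ => 1 := by
      simp [v, resolvent, mulVec_mulVec, Ring.mul_inverse_cancel _ hunit]
    rw [sub_mulVec, one_mulVec, sub_eq_iff_eq_add] at hsolve
    exact hsolve
  have hAv : 0 ≤ A *ᵥ v :=
    hA.mulVec_nonneg ((resolvent_nonneg hA h).mulVec_nonneg fun _ => zero_le_one)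
  have hv_le : ∀ i, v i ≤ ‖v‖ := fun i => (le_abs_self _).trans (norm_le_pi_norm v i)
  refine ⟨v, fun i => ?_, ‖v‖₊ / (‖v‖₊ + 1), ?_, fun i => ?_⟩
  · rw [hv, Pi.add_apply, Pi.one_apply]
    linarith [show 0 ≤ (A *ᵥ v) i from hAv i]
  · exact (div_lt_one (by positivity)).2 (lt_add_one _)
  · have hvi : (A *ᵥ v) i = v i - 1 := by
      conv_rhs => rw [hv]
      simp
    rw [hvi, NNReal.coe_div, NNReal.coe_add, coe_nnnorm, NNReal.coe_one, div_mul_eq_mul_div,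
      le_div_iff₀ (by positivity)]
    nlinarith [hv_le i]

section FixedPoint

variable [Fintype n] {A : Matrix n n ℝ} {F : (n → ℝ) → n → ℝ} {v : n → ℝ} {c : ℝ≥0}

theorem contractingWith_rescale (hA : A.Nonneg) (hv : ∀ i, 0 < v i) (hc : c < 1)
    (hAv : ∀ i, (A *ᵥ v) i ≤ c * v i)
    (hF : ∀ X Y i, |F X i - F Y i| ≤ (A *ᵥ fun j => |X j - Y j|) i) :
    ContractingWith c fun z => F (v * z) / v := by
  refine ⟨hc, LipschitzWith.of_dist_le_mul fun z w =>
    (dist_pi_le_iff (by positivity)).2 fun i => ?_⟩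
  rw [Real.dist_eq, Pi.div_apply, Pi.div_apply, div_sub_div_same, abs_div, abs_of_pos (hv i),
    div_le_iff₀ (hv i)]
  have hscale : (fun j => |(v * z) j - (v * w) j|) ≤ dist z w • v := fun j => by
    show |v j * z j - v j * w j| ≤ dist z w * v j
    rw [← mul_sub, abs_mul, abs_of_pos (hv j), mul_comm]
    exact mul_le_mul_of_nonneg_right (by simpa [Real.dist_eq] using dist_le_pi_dist z w j)
      (hv j).le
  calc |F (v * z) i - F (v * w) i| ≤ (A *ᵥ fun j => |(v * z) j - (v * w) j|) i := hF _ _ i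
    _ ≤ (A *ᵥ (dist z w • v)) i := hA.mulVec_mono hscale i
    _ = dist z w * (A *ᵥ v) i := by rw [mulVec_smul]; rfl
    _ ≤ dist z w * (c * v i) := by gcongr; exact hAv i
    _ = c * dist z w * v i := by ring

theorem existsUnique_isFixedPt_of_abs_sub_le_mulVec (hA : A.Nonneg) (hv : ∀ i, 0 < v i)
    (hc : c < 1) (hAv : ∀ i, (A *ᵥ v) i ≤ c * v i)
    (hF : ∀ X Y i, |F X i - F Y i| ≤ (A *ᵥ fun j => |X j - Y j|) i) :
    ∃! X, Function.IsFixedPt F X := by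
  have hG := contractingWith_rescale hA hv hc hAv hF
  have hmul_div : ∀ X : n → ℝ, v * (X / v) = X := fun X => funext fun i => by
    simp [mul_div_cancel₀ _ (hv i).ne']
  have hfix : ∀ z, Function.IsFixedPt (fun z => F (v * z) / v) z ↔ Function.IsFixedPt F (v * z) :=
    fun z => by
      simp only [Function.IsFixedPt, funext_iff, Pi.div_apply, Pi.mul_apply,
        div_eq_iff (hv _).ne', mul_comm (v _)]
  refine ⟨v * ContractingWith.fixedPoint _ hG, (hfix _).1 hG.fixedPoint_isFixedPt,
    fun X hX => ?_⟩
  rw [← hmul_div X, ← hG.fixedPoint_unique ((hfix _).2 (by rwa [hmul_div]))]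

end FixedPoint

end Matrix

theorem LipschitzWith.abs_sub_comp_mulVec_add_le {n : Type*} [Fintype n] {φ : ℝ → ℝ}
    (hφ : LipschitzWith 1 φ) (W : Matrix n n ℝ) (b X Y : n → ℝ) (i : n) :
    |φ ((W *ᵥ X) i + b i) - φ ((W *ᵥ Y) i + b i)| ≤
      (W.map (fun a => |a|) *ᵥ fun j => |X j - Y j|) i := by
  calc _ ≤ |(W *ᵥ X) i + b i - ((W *ᵥ Y) i + b i)| := by
        simpa [← Real.dist_eq] using hφ.dist_le_mul ((W *ᵥ X) i + b i) ((W *ᵥ Y) i + b i)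
    _ = |(W *ᵥ (X - Y)) i| := by rw [mulVec_sub, Pi.sub_apply, add_sub_add_right_eq_sub]
    _ ≤ _ := abs_mulVec_le_map_abs_mulVec W (X - Y) i

theorem stmt_18 (M : ℕ) (W : Matrix (Fin M) (Fin M) ℝ)
    (hpf : ∀ mu ∈ spectrum ℝ (W.map fun a => |a|), mu < 1) :
    IsUnit (1 - W) ∧
    ∀ phi : ℝ → ℝ, LipschitzWith 1 phi → phi 0 = 0 →
      ∀ x b : Fin M → ℝ,
        ∃! X : Fin M → ℝ, ∀ i, X i = x i + phi (W.mulVec X i + b i) := by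
  have hA : (W.map fun a => |a|).Nonneg := fun i j => abs_nonneg _
  obtain ⟨v, hv, c, hc, hAv⟩ := exists_pos_mulVec_le_of_spectrum_lt_one hA hpf
  have hsolve : ∀ phi : ℝ → ℝ, LipschitzWith 1 phi → ∀ x b : Fin M → ℝ,
      ∃! X : Fin M → ℝ, ∀ i, X i = x i + phi (W.mulVec X i + b i) := by
    intro phi hphi x b
    simpa [Function.IsFixedPt, funext_iff, eq_comm] using
      existsUnique_isFixedPt_of_abs_sub_le_mulVec hA hv hc hAv fun X Y i => by
        simpa using hphi.abs_sub_comp_mulVec_add_le W b X Y i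
  refine ⟨?_, fun phi hphi _ => hsolve phi hphi⟩
  obtain ⟨_, _, huniq⟩ := hsolve id LipschitzWith.id 0 0
  have hker : ∀ Z, (1 - W) *ᵥ Z = 0 → Z = 0 := fun Z hZ =>
    huniq Z (fun i => by simpa [sub_mulVec, sub_eq_zero] using congrFun hZ i) |>.trans
      (huniq 0 fun i => by simp).symm
  refine mulVec_injective_iff_isUnit.1 fun X Y hXY => sub_eq_zero.1 (hker _ ?_)
  rw [mulVec_sub, hXY, sub_self]
end
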